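/- arXiv:1911.04204 — 8 statements merged into one kernel-verified Lean document; each statement's English description precedes it below -/
import Mathlib

section
/- Let C be a commutative ring (algebra over a field F) and p = Σ_{i=0}^n c_i x^i a polynomial in C[x]. If p^k = p for some k ≥ 2 such that char(F) does not divide k−1, then p is constant (c_i = 0 for all i ≥ 1). -/
/-!
Modulo every prime ideal, `p^k = p` with `k ≠ 1` forces `p` to be constant (degrees multiply in
a domain), so `p - C (p.coeff 0)` is nilpotent. Two solutions `x, y` of `t^k = t` that differ by a
nilpotent coincide: `x - y = x^k - y^k = (x - y) S` with `S ≡ k e` modulo nilpotents, where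
`e = x^(k-1)` is idempotent, and `1 - k e` is a unit as soon as `1 - k` is.
-/

open Polynomial

section PowEqSelf

variable {R : Type*} [CommRing R] {k : ℕ}

theorem isIdempotentElem_pow_sub_one_of_pow_eq_self {x : R} (hx : x ^ k = x) :
    IsIdempotentElem (x ^ (k - 1)) := by
  rcases k with _ | _ | k
  · simp [IsIdempotentElem]
  · simp [IsIdempotentElem]
  · simp only [IsIdempotentElem, ← pow_add, Nat.add_sub_cancel]
    rw [show k + 1 + (k + 1) = (k + 2) + k by omega, pow_add, hx, ← pow_succ']

theorem IsIdempotentElem.isUnit_one_sub_mul {c e : R} (he : IsIdempotentElem e)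
    (hc : IsUnit (1 - c)) : IsUnit (1 - c * e) := by
  obtain ⟨u, hu⟩ := hc.exists_right_inv
  -- `1 - c * e` acts as `1` on `1 - e` and as `1 - c` on `e`
  refine .of_mul_eq_one (1 - e + u * e) ?_
  linear_combination c * (1 - u) * he.eq + e * hu

theorem eq_of_pow_eq_self_of_isNilpotent_sub (hk : IsUnit (1 - (k : R))) {x y : R}
    (hx : x ^ k = x) (hy : y ^ k = y) (hxy : IsNilpotent (x - y)) : x = y := by
  set S := ∑ i ∈ Finset.range k, x ^ i * y ^ (k - 1 - i)
  have hfactor : (x - y) * (1 - S) = 0 := by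
    have := geom_sum₂_mul x y k
    rw [hx, hy] at this
    linear_combination -this
  have hS : IsNilpotent (k * x ^ (k - 1) - S) := by
    rw [← mem_nilradical, ← Ideal.Quotient.eq]
    have hxy' : Ideal.Quotient.mk (nilradical R) x = Ideal.Quotient.mk (nilradical R) y := by
      rwa [Ideal.Quotient.eq]
    simp only [S, RingHom.map_geom_sum₂, ← hxy', geom_sum₂_self, map_mul, map_natCast, map_pow]
  have hunit : IsUnit (1 - S) := by
    have := hS.isUnit_add_right_of_commute
      ((isIdempotentElem_pow_sub_one_of_pow_eq_self hx).isUnit_one_sub_mul hk) (.all _ _)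
    rwa [sub_add_sub_cancel'] at this
  exact sub_eq_zero.mp ((hunit.mul_left_eq_zero).mp hfactor)

end PowEqSelf

namespace Polynomial

variable {R : Type*} [CommRing R] {k : ℕ}

theorem natDegree_eq_zero_of_pow_eq_self [NoZeroDivisors R] {q : R[X]} (hk : k ≠ 1)
    (hq : q ^ k = q) : q.natDegree = 0 := by
  have := congrArg natDegree hq
  rw [natDegree_pow] at this
  rcases Nat.eq_zero_or_pos q.natDegree with h | h
  · exact h
  · exact absurd (Nat.eq_of_mul_eq_mul_right h (this.trans (one_mul _).symm)) hk

theorem isNilpotent_coeff_of_pow_eq_self {p : R[X]} (hk : k ≠ 1) (hp : p ^ k = p) {i : ℕ}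
    (hi : i ≠ 0) : IsNilpotent (p.coeff i) := by
  rw [← mem_nilradical, nilradical_eq_sInf, Ideal.mem_sInf]
  intro J (hJ : J.IsPrime)
  have hdeg := natDegree_eq_zero_of_pow_eq_self hk
    (by rw [← Polynomial.map_pow, hp] : (p.map (Ideal.Quotient.mk J)) ^ k = _)
  rw [← Ideal.Quotient.eq_zero_iff_mem, ← coeff_map]
  exact coeff_eq_zero_of_natDegree_lt (hdeg ▸ Nat.pos_of_ne_zero hi)

theorem eq_C_coeff_zero_of_pow_eq_self (hk : IsUnit (1 - (k : R[X]))) (hk1 : k ≠ 1) {p : R[X]}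
    (hp : p ^ k = p) : p = C (p.coeff 0) := by
  refine eq_of_pow_eq_self_of_isNilpotent_sub hk hp ?_ ?_
  · rw [← C_pow, coeff_zero_eq_eval_zero, ← eval_pow, hp]
  · rw [Polynomial.isNilpotent_iff]
    intro i
    rcases eq_or_ne i 0 with rfl | hi
    · simp
    · simpa [coeff_C, hi] using isNilpotent_coeff_of_pow_eq_self hk1 hp hi

end Polynomial

/-- If `C` is a commutative algebra over a field `F`, `p ∈ C[x]` satisfies `p^k = p` for some
`k ≥ 2` with `char F ∤ (k-1)` (i.e. `k-1 ≠ 0` in `F`), then `p` is constant. -/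
theorem stmt_0 {F C : Type*} [Field F] [CommRing C] [Algebra F C]
    (p : Polynomial C) (k : ℕ) (hk : 2 ≤ k)
    (hchar : ((k - 1 : ℕ) : F) ≠ 0)
    (hp : p ^ k = p) :
    ∀ i : ℕ, 1 ≤ i → p.coeff i = 0 := by
  have hunit : IsUnit (1 - (k : Polynomial C)) := by
    have := ((isUnit_iff_ne_zero.mpr hchar).map (algebraMap F (Polynomial C))).neg
    rwa [map_natCast, Nat.cast_sub (by omega), Nat.cast_one, neg_sub] at this
  intro i hi
  rw [eq_C_coeff_zero_of_pow_eq_self hunit (by omega) hp, coeff_C, if_neg (by omega)]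
end

section
/- Let C be a unital commutative ring with no nonzero nilpotent elements and let p ∈ C[x] be a root of a nonzero polynomial with coefficients in a field F ⊆ C. Then p is constant. -/
/-!
Modulo a prime `P`, the image of `p` in `(C ⧸ P)[X]` is still algebraic over `F`; over a domain a
nonconstant polynomial is transcendental even over the coefficient ring, so this image is
constant. Hence every nonconstant coefficient of `p` lies in all prime ideals, i.e. is nilpotent,
and so vanishes because `C` is reduced.
-/

open Polynomial
open scoped nonZeroDivisors

namespace Polynomial

variable {F : Type*} [Field F]

theorem natDegree_eq_zero_of_isAlgebraic {D : Type*} [CommRing D] [IsDomain D] [Algebra F D]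
    {p : D[X]} (hp : IsAlgebraic F p) : p.natDegree = 0 := by
  by_contra hdeg
  have hp0 : p ≠ 0 := by rintro rfl; exact hdeg natDegree_zero
  have hlc : p.leadingCoeff ∈ D⁰ := mem_nonZeroDivisors_of_ne_zero (leadingCoeff_ne_zero.mpr hp0)
  exact (p.transcendental hdeg hlc).restrictScalars (algebraMap F D).injective hp

theorem coeff_eq_zero_of_isAlgebraic {C : Type*} [CommRing C] [IsReduced C] [Algebra F C]
    {p : C[X]} (hp : IsAlgebraic F p) {i : ℕ} (hi : i ≠ 0) : p.coeff i = 0 := by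
  refine isNilpotent_iff_eq_zero.mp (nilpotent_iff_mem_prime.mpr fun P hP => ?_)
  have hPalg : IsAlgebraic F (p.map (Ideal.Quotient.mk P)) :=
    hp.algHom (mapAlgHom (Ideal.Quotient.mkₐ F P))
  have hconst := natDegree_eq_zero_of_isAlgebraic hPalg
  have hcoeff : (p.map (Ideal.Quotient.mk P)).coeff i = 0 :=
    coeff_eq_zero_of_natDegree_lt (by omega)
  rwa [coeff_map, Ideal.Quotient.eq_zero_iff_mem] at hcoeff

end Polynomial

/-- If `C` is a reduced commutative unital algebra over a field `F` and `p ∈ C[x]` is a root of a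
nonzero polynomial with coefficients in `F`, then `p` is constant. -/
theorem stmt_1 {F C : Type*} [Field F] [CommRing C] [IsReduced C] [Algebra F C]
    (p : Polynomial C) (q : Polynomial F) (hq : q ≠ 0)
    (hroot : Polynomial.aeval p q = 0) :
    ∀ i : ℕ, 1 ≤ i → p.coeff i = 0 :=
  fun _ hi => coeff_eq_zero_of_isAlgebraic ⟨q, hq, hroot⟩ (by omega)
end

section
/- Let F be a functor from a category of algebras A (closed under polynomial extensions A ↦ A[x]) to a category C. If for every algebra A the maps F(p₀), F(p₁) : F(A[x]) → F(A), induced by the evaluations x ↦ 0 and x ↦ 1, are equal, then for every algebra A the map F(e) : F(A) → F(A[x]) induced by the inclusion a ↦ a is an isomorphism, with inverse F(p₀). -/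
/-!
The substitution `p(x) ↦ p(xy)` is an elementary homotopy from `e ∘ p₀` to the identity of
`A[x]`: setting `y = 0` gives `p(0)`, setting `y = 1` gives `p`. A functor that identifies
`p₀` and `p₁` identifies elementarily homotopic morphisms, hence `F(e) ∘ F(p₀) = 1`;
the other composite `p₀ ∘ e = 1` holds already in the category of algebras.
-/

open CategoryTheory Polynomial

universe u v w

/-- The polynomial extension `A[x]` of an algebra `A`, as an object of `AlgebraCat F`. -/
noncomputable def polyExt {F : Type u} [Field F] (A : AlgCat.{u} F) : AlgCat.{u} F :=
  AlgCat.of F (Polynomial A)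

/-- The evaluation morphism `p₀ : A[x] → A`, `x ↦ 0`. -/
noncomputable def pEval0 {F : Type u} [Field F] (A : AlgCat.{u} F) : polyExt A ⟶ A :=
  AlgCat.ofHom
    (Polynomial.eval₂AlgHom (AlgHom.id F ↥A) 0 fun a => Commute.zero_right a)

/-- The evaluation morphism `p₁ : A[x] → A`, `x ↦ 1`. -/
noncomputable def pEval1 {F : Type u} [Field F] (A : AlgCat.{u} F) : polyExt A ⟶ A :=
  AlgCat.ofHom
    (Polynomial.eval₂AlgHom (AlgHom.id F ↥A) 1 fun a => Commute.one_right a)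

/-- The canonical embedding `e : A → A[x]`. -/
noncomputable def pEmb {F : Type u} [Field F] (A : AlgCat.{u} F) : A ⟶ polyExt A :=
  AlgCat.ofHom (Polynomial.CAlgHom (R := F) (A := ↥A))

namespace Polynomial

variable {R A : Type*} [CommSemiring R] [Semiring A] [Algebra R A]

variable (R) in
/-- `p(x) ↦ p(xy)`, with `y` the outer variable of `A[X][X]`. -/
noncomputable def contraction : A[X] →ₐ[R] A[X][X] :=
  eval₂AlgHom (CAlgHom.comp CAlgHom) (C X * X) fun a =>
    ((commute_X (C a)).symm.map C).mul_right (commute_X _).symm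

lemma contraction_apply (p : A[X]) : contraction R p = p.eval₂ (C.comp C) (C X * X) := rfl

lemma contraction_monomial (n : ℕ) (a : A) :
    contraction R (monomial n a) = monomial n (monomial n a) := by
  rw [contraction_apply, eval₂_monomial, (commute_X _).symm.mul_pow, ← C_pow, ← mul_assoc,
    RingHom.comp_apply, ← C_mul, C_mul_X_pow_eq_monomial, C_mul_X_pow_eq_monomial]

lemma eval_zero_contraction (p : A[X]) : (contraction R p).eval 0 = C (p.eval 0) := by
  induction p using Polynomial.induction_on' with
  | add p q hp hq => simp [hp, hq]
  | monomial n a =>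
    rw [contraction_monomial]
    rcases n with _ | n <;> simp

lemma eval_one_contraction (p : A[X]) : (contraction R p).eval 1 = p := by
  induction p using Polynomial.induction_on' with
  | add p q hp hq => simp [hp, hq]
  | monomial n a => rw [contraction_monomial]; simp

end Polynomial

section ElementaryHomotopy

variable {F : Type u} [Field F]

lemma pEmb_comp_pEval0 (A : AlgCat.{u} F) : pEmb A ≫ pEval0 A = 𝟙 A := by
  ext a
  exact eval_C

def ElementarilyHomotopic {B D : AlgCat.{u} F} (f g : B ⟶ D) : Prop :=
  ∃ H : B ⟶ polyExt D, H ≫ pEval0 D = f ∧ H ≫ pEval1 D = g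

lemma elementarilyHomotopic_pEval0_comp_pEmb_id (A : AlgCat.{u} F) :
    ElementarilyHomotopic (pEval0 A ≫ pEmb A) (𝟙 (polyExt A)) := by
  refine ⟨AlgCat.ofHom (contraction F), ?_, ?_⟩ <;> ext p : 2
  · exact eval_zero_contraction p
  · exact eval_one_contraction p

lemma ElementarilyHomotopic.map_eq {C : Type v} [Category.{w} C] (G : AlgCat.{u} F ⥤ C)
    {B D : AlgCat.{u} F} (hG : G.map (pEval0 D) = G.map (pEval1 D)) {f g : B ⟶ D}
    (hfg : ElementarilyHomotopic f g) : G.map f = G.map g := by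
  obtain ⟨H, rfl, rfl⟩ := hfg
  rw [G.map_comp, G.map_comp, hG]

end ElementaryHomotopy

/-- If a functor `G` on the category of `F`-algebras identifies the two evaluation morphisms
`p₀, p₁ : A[x] → A` (at `x = 0` and `x = 1`) for every algebra `A`, then for every `A` the map
`G(e) : G(A) → G(A[x])` induced by the embedding `e : A → A[x]` is an isomorphism with inverse
`G(p₀)`. -/
theorem stmt_6 {F : Type u} [Field F] {C : Type v} [Category.{w} C]
    (G : AlgCat.{u} F ⥤ C)
    (h : ∀ A : AlgCat.{u} F, G.map (pEval0 A) = G.map (pEval1 A)) :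
    ∀ A : AlgCat.{u} F,
      G.map (pEmb A) ≫ G.map (pEval0 A) = 𝟙 (G.obj A) ∧
      G.map (pEval0 A) ≫ G.map (pEmb A) = 𝟙 (G.obj (polyExt A)) := by
  intro A
  rw [← G.map_comp, ← G.map_comp, pEmb_comp_pEval0,
    (elementarilyHomotopic_pEval0_comp_pEmb_id A).map_eq G (h _)]
  exact ⟨G.map_id _, G.map_id _⟩
end

section
/- Let A be a nonunital algebra over a field F (possibly noncommutative). For every nonzero a ∈ A there exists an algebra C and an algebra morphism φ : A → C[x] such that φ(a) is not a constant polynomial. Concretely, the map a ↦ E₁₁(a) + E₁₂(a)·x into M₂(A)[x], where E₁₁(a) is the matrix with a in the (1,1)-entry and E₁₂(a) has a in the (1,2)-entry and zeros elsewhere, is an algebra homomorphism sending every nonzero a to a nonconstant polynomial. -/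
open Polynomial Matrix

universe u v

/-- The map `a ↦ E₁₁(a) + E₁₂(a)·x` from a nonunital algebra `A` into `M₂(A)[x]`
(matrices taken over the unitization of `A` so that polynomials make sense). -/
noncomputable def stdMap {F : Type u} {A : Type v} [Field F] [NonUnitalRing A] [Module F A]
    [SMulCommClass F A A] [IsScalarTower F A A] (a : A) :
    Polynomial (Matrix (Fin 2) (Fin 2) (Unitization F A)) :=
  C (Matrix.single 0 0 (Unitization.inr a)) +
    C (Matrix.single 0 1 (Unitization.inr a)) * X

/-! For `i ≠ j` the matrix units satisfy `Eᵢᵢ Eᵢᵢ = Eᵢᵢ`, `Eᵢᵢ Eᵢⱼ = Eᵢⱼ` and `Eᵢⱼ Eᵢᵢ = Eᵢⱼ Eᵢⱼ = 0`,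
so in `(Eᵢᵢ r + Eᵢⱼ r x)(Eᵢᵢ s + Eᵢⱼ s x)` only the terms `Eᵢᵢ(rs)` and `Eᵢⱼ(rs) x` survive: the map
is multiplicative, and its `x`-coefficient remembers `r`. -/

theorem Polynomial.C_add_C_mul_X_mul_C_add_C_mul_X {R : Type*} [Semiring R] (a b c d : R) :
    (C a + C b * X) * (C c + C d * X) =
      C (a * c) + C (a * d + b * c) * X + C (b * d) * X ^ 2 := by
  simp only [add_mul, mul_add, C_mul, C_add, mul_assoc, X_mul, pow_two]
  abel

section

variable (S : Type*) {R : Type*} [CommSemiring S] [Semiring R] [Algebra S R]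
  {n : Type*} [Fintype n] [DecidableEq n] {i j : n}

noncomputable def singleAddSingleMulX (hij : i ≠ j) : R →ₙₐ[S] (Matrix n n R)[X] where
  toFun r := C (single i i r) + C (single i j r) * X
  map_smul' c r := by
    simp only [← smul_single, ← smul_C, smul_add, smul_mul_assoc, MonoidHom.id_apply]
  map_zero' := by simp
  map_add' r s := by
    simp only [single_add, C_add, add_mul]
    abel
  map_mul' r s := by
    simp [C_add_C_mul_X_mul_C_add_C_mul_X, hij.symm]

variable {S}

theorem singleAddSingleMulX_coeff_one (hij : i ≠ j) (r : R) :
    (singleAddSingleMulX S hij r).coeff 1 = single i j r := by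
  simp [singleAddSingleMulX, coeff_C]

theorem singleAddSingleMulX_coeff_one_ne_zero (hij : i ≠ j) {r : R} (hr : r ≠ 0) :
    (singleAddSingleMulX S hij r).coeff 1 ≠ 0 := by
  rw [singleAddSingleMulX_coeff_one]
  exact fun h => hr (by simpa using congrFun (congrFun h i) j)

end

section

variable {F : Type u} {A : Type v} [Field F] [NonUnitalRing A] [Module F A]
  [SMulCommClass F A A] [IsScalarTower F A A]

noncomputable def stdMapHom : A →ₙₐ[F] (Matrix (Fin 2) (Fin 2) (Unitization F A))[X] :=
  (singleAddSingleMulX F (R := Unitization F A) zero_ne_one).comp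
    (Unitization.inrNonUnitalAlgHom F A)

theorem coe_stdMapHom : ⇑(stdMapHom : A →ₙₐ[F] _) = stdMap (F := F) := rfl

theorem stdMap_coeff_one_ne_zero {a : A} (ha : a ≠ 0) : (stdMap (F := F) a).coeff 1 ≠ 0 :=
  singleAddSingleMulX_coeff_one_ne_zero (S := F) zero_ne_one
    ((Unitization.inr_injective.ne_iff' (Unitization.inr_zero F)).mpr ha)

end

/-- For every nonzero element `a` of a (possibly noncommutative, nonunital) algebra `A` over a
field `F` there is an algebra `C` and a morphism `φ : A → C[x]` with `φ a` nonconstant; concretely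
the map `a ↦ E₁₁(a) + E₁₂(a)·x` into `M₂(A)[x]` is an algebra homomorphism sending every nonzero
element to a nonconstant polynomial. -/
theorem stmt_7 {F : Type u} {A : Type v} [Field F] [NonUnitalRing A] [Module F A]
    [SMulCommClass F A A] [IsScalarTower F A A] :
    (∀ a : A, a ≠ 0 → ∃ (C : Type (max u v)) (_ : Ring C) (_ : Algebra F C)
      (φ : A →ₙₐ[F] Polynomial C), ∃ i : ℕ, 1 ≤ i ∧ (φ a).coeff i ≠ 0) ∧
    (∀ a b : A, stdMap (F := F) (a + b) = stdMap (F := F) a + stdMap (F := F) b) ∧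
    (∀ a b : A, stdMap (F := F) (a * b) = stdMap (F := F) a * stdMap (F := F) b) ∧
    (∀ (c : F) (a : A), stdMap (F := F) (c • a) = c • stdMap (F := F) a) ∧
    (∀ a : A, a ≠ 0 → (stdMap (F := F) a).coeff 1 ≠ 0) := by
  rw [← coe_stdMapHom]
  exact ⟨fun a ha => ⟨_, inferInstance, inferInstance, stdMapHom, 1, le_rfl,
      stdMap_coeff_one_ne_zero ha⟩,
    map_add _, map_mul _, map_smul _, fun _ => stdMap_coeff_one_ne_zero⟩
end

section
/- Let A be a commutative unital algebra over a field F of characteristic 0, let d : A → Ω¹(A) be the universal derivation (Kähler differentials over F), and for a ∈ A define P(a) to mean: for every commutative unital F-algebra B and every unital algebra morphism φ : A → B[x], φ(a) is constant. Then ker(d) = {a ∈ A : P(a)}. -/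
/-!
If `d a = 0`, then for any `φ : A → B[x]` the map `D ∘ φ`, with `D` the formal derivative,
is an `F`-derivation of `A`, so it factors through `d` and kills `a`; in characteristic zero
a polynomial with vanishing derivative is constant. Conversely, `a ↦ a + (d a) x` is an
algebra morphism into `(A ⊕ Ω¹(A))[x]` (square-zero extension), and the constancy of the
image of `a` says `d a = 0`.
-/

universe u

open Polynomial TrivSqZeroExt

theorem Derivation.apply_algHom_eq_zero_of_D_eq_zero {R A C : Type*} [CommRing R] [CommRing A]
    [Algebra R A] [CommRing C] [Algebra R C] (φ : A →ₐ[R] C) (δ : Derivation R C C) {a : A}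
    (ha : KaehlerDifferential.D R A a = 0) : δ (φ a) = 0 := by
  let _ := φ.toAlgebra
  have : IsScalarTower R A C := .of_algebraMap_eq fun r ↦ (φ.commutes r).symm
  have h := (δ.compAlgebraMap A).liftKaehlerDifferential_comp_D a
  rwa [ha, map_zero, eq_comm] at h

theorem Polynomial.exists_eq_C_of_derivative_eq_zero (F : Type*) {B : Type*} [Field F]
    [CharZero F] [CommRing B] [Algebra F B] {p : B[X]} (hp : derivative p = 0) : ∃ b, p = C b :=
  have := IsAddTorsionFree.of_isTorsionFree F B
  ⟨_, eq_C_of_derivative_eq_zero hp⟩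

namespace Derivation

variable {R A M : Type*} [CommRing R] [CommRing A] [Algebra R A] [AddCommGroup M]
  [Module A M] [Module Aᵐᵒᵖ M] [IsCentralScalar A M] [Module R M] [IsScalarTower R A M]
  [IsScalarTower R Aᵐᵒᵖ M]

noncomputable def toPolynomialTrivSqZeroExt (D : Derivation R A M) :
    A →ₐ[R] (TrivSqZeroExt A M)[X] where
  toFun a := C (inl a) + C (inr (D a)) * X
  map_one' := by simp
  map_mul' a b := by
    have hsq : C (inr (D a)) * C (inr (D b)) = (0 : (TrivSqZeroExt A M)[X]) := by
      rw [← C_mul, inr_mul_inr, C_0]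
    rw [leibniz, inr_add, ← inl_mul_inr, ← inl_mul_inr, inl_mul]
    simp only [map_add, map_mul]
    linear_combination (-X ^ 2 : (TrivSqZeroExt A M)[X]) * hsq
  map_zero' := by simp
  map_add' a b := by simp only [map_add, inl_add, inr_add]; ring
  commutes' r := by simp [Polynomial.algebraMap_apply, algebraMap_eq_inl']

theorem toPolynomialTrivSqZeroExt_apply (D : Derivation R A M) (a : A) :
    D.toPolynomialTrivSqZeroExt a = C (inl a) + C (inr (D a)) * X :=
  rfl

theorem coeff_toPolynomialTrivSqZeroExt_one (D : Derivation R A M) (a : A) :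
    (D.toPolynomialTrivSqZeroExt a).coeff 1 = inr (D a) := by
  simp [toPolynomialTrivSqZeroExt_apply]

end Derivation

section KaehlerDifferential

variable {F A : Type*} [CommRing F] [CommRing A] [Algebra F A]

-- `TrivSqZeroExt` needs a right action; over a commutative ring it is the left one.
noncomputable instance : Module Aᵐᵒᵖ Ω[A⁄F] :=
  Module.compHom _ ((RingHom.id A).fromOpposite mul_comm)

instance : IsCentralScalar A Ω[A⁄F] := ⟨fun _ _ ↦ rfl⟩

instance : IsScalarTower F Aᵐᵒᵖ Ω[A⁄F] :=
  ⟨fun r a m ↦ smul_assoc r a.unop m⟩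

end KaehlerDifferential

/-- Over a field of characteristic zero, the kernel of the universal derivation
`d : A → Ω¹_{A/F}` consists exactly of the elements `a ∈ A` such that for every commutative
unital `F`-algebra `B` and every unital algebra morphism `φ : A → B[x]`, `φ a` is constant. -/
theorem stmt_10 {F A : Type u} [Field F] [CharZero F] [CommRing A] [Algebra F A] (a : A) :
    (KaehlerDifferential.D F A) a = 0 ↔
      ∀ (B : Type u) [CommRing B] [Algebra F B]
        (φ : A →ₐ[F] Polynomial B), ∃ b : B, φ a = Polynomial.C b := by
  constructor
  · intro ha B _ _ φ
    let δ : Derivation F B[X] B[X] := derivative'.restrictScalars F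
    exact exists_eq_C_of_derivative_eq_zero F (δ.apply_algHom_eq_zero_of_D_eq_zero φ ha)
  · intro hconst
    obtain ⟨b, hb⟩ := hconst _ (KaehlerDifferential.D F A).toPolynomialTrivSqZeroExt
    have hcoeff := (KaehlerDifferential.D F A).coeff_toPolynomialTrivSqZeroExt_one a
    rw [hb, coeff_C_of_ne_zero one_ne_zero] at hcoeff
    simpa using congr_arg snd hcoeff.symm
end

section
/- Let A be a unital algebra over F. For any subset S ⊆ A, define P_S(A) = {a ∈ A : for every algebra C of class S and morphism φ : A → C[x], φ(a) is constant}. Then the set P^cu(A) of elements a such that every UNITAL morphism from A into B[x] (B commutative unital) sends a to a constant equals the set P^c(A) of elements a such that every (not necessarily unital) morphism from A into C[x] (C commutative, not necessarily unital) sends a to a constant. -/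
/-!
A morphism `φ : A → C[X]` from a unital algebra sends `1` to an idempotent of `C[X]`, and
idempotent polynomials over a commutative ring are constant, so `φ 1 = C e` with `e` idempotent.
Then `φ a = e • φ a` for all `a`, so `φ` takes values in `Ĉ[X]` for the corner `Ĉ = e C`, a
commutative algebra with unit `e`, and `φ : A → Ĉ[X]` is unital. Here `Ĉ` is realised as the
quotient `C ⧸ (1 - e)`, into which `e C` embeds; so `φ a` is constant as soon as its image in
`Ĉ[X]` is.
-/
universe u

open Polynomial

namespace Polynomial

variable {R : Type*}

theorem eq_zero_of_isIdempotentElem_of_X_dvd [CommSemiring R] {w : R[X]}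
    (hw : IsIdempotentElem w) (hX : X ∣ w) : w = 0 := by
  ext n
  have hdvd : X ^ (n + 1) ∣ w := hw.pow_succ_eq n ▸ pow_dvd_pow_of_dvd hX (n + 1)
  exact X_pow_dvd_iff.mp hdvd n n.lt_succ_self

theorem eq_C_of_isIdempotentElem [CommRing R] {p : R[X]} (hp : IsIdempotentElem p) :
    p = C (p.coeff 0) := by
  have hp0 : IsIdempotentElem (p.coeff 0) := hp.map constantCoeff
  have he : IsIdempotentElem (C (p.coeff 0)) := hp0.map C
  -- `p (1 - e)` and `e (1 - p)` are idempotents with constant term `p₀ (1 - p₀) = 0`.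
  have h₁ : p * (1 - C (p.coeff 0)) = 0 :=
    eq_zero_of_isIdempotentElem_of_X_dvd (hp.mul he.one_sub) <| X_dvd_iff.mpr <| by
      rw [mul_coeff_zero, coeff_sub, coeff_one_zero, coeff_C_zero, hp0.mul_one_sub_self]
  have h₂ : C (p.coeff 0) * (1 - p) = 0 :=
    eq_zero_of_isIdempotentElem_of_X_dvd (he.mul hp.one_sub) <| X_dvd_iff.mpr <| by
      rw [mul_coeff_zero, coeff_sub, coeff_one_zero, coeff_C_zero, hp0.mul_one_sub_self]
  linear_combination h₁ - h₂

end Polynomial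

theorem Ideal.Quotient.mk_span_one_sub_eq_zero_iff {S : Type*} [CommRing S] {e c : S}
    (he : IsIdempotentElem e) : Ideal.Quotient.mk (Ideal.span {1 - e}) c = 0 ↔ e * c = 0 := by
  rw [Ideal.Quotient.eq_zero_iff_mem, Ideal.mem_span_singleton']
  constructor
  · rintro ⟨d, rfl⟩
    rw [mul_left_comm, he.mul_one_sub_self, mul_zero]
  · exact fun h ↦ ⟨c, by linear_combination -h⟩

namespace NonUnitalAlgHom

variable {R A S : Type*} [CommRing R] [Ring A] [Algebra R A] [CommRing S] [Algebra R S]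
  (φ : A →ₙₐ[R] S[X])

theorem isIdempotentElem_map_one : IsIdempotentElem (φ 1) := by
  rw [IsIdempotentElem, ← map_mul, one_mul]

theorem map_one_eq_C : φ 1 = C ((φ 1).coeff 0) :=
  eq_C_of_isIdempotentElem φ.isIdempotentElem_map_one

theorem isIdempotentElem_coeff_zero_map_one : IsIdempotentElem ((φ 1).coeff 0) :=
  φ.isIdempotentElem_map_one.map constantCoeff

abbrev cornerIdeal : Ideal S := Ideal.span {1 - (φ 1).coeff 0}

theorem mk_coeff_zero_map_one : Ideal.Quotient.mk φ.cornerIdeal ((φ 1).coeff 0) = 1 := by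
  rw [← map_one (Ideal.Quotient.mk φ.cornerIdeal)]
  exact (Ideal.Quotient.eq.mpr (Ideal.mem_span_singleton_self _)).symm

noncomputable def toCornerAlgHom : A →ₐ[R] (S ⧸ φ.cornerIdeal)[X] :=
  let ψ := (mapAlgHom (Ideal.Quotient.mkₐ R φ.cornerIdeal)).toNonUnitalAlgHom.comp φ
  AlgHom.ofLinearMap (LinearMapClass.linearMap ψ)
    (by
      change mapAlgHom _ (φ 1) = 1
      rw [φ.map_one_eq_C, coe_mapAlgHom, map_C]
      exact (congrArg C φ.mk_coeff_zero_map_one).trans C_1)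
    (map_mul ψ)

theorem coeff_toCornerAlgHom (a : A) (n : ℕ) :
    (φ.toCornerAlgHom a).coeff n = Ideal.Quotient.mk φ.cornerIdeal ((φ a).coeff n) := by
  change (mapAlgHom _ (φ a)).coeff n = _
  rw [coeff_mapAlgHom_apply, Ideal.Quotient.mkₐ_eq_mk]

theorem eq_C_of_toCornerAlgHom_eq_C {a : A} {b : S ⧸ φ.cornerIdeal}
    (hb : φ.toCornerAlgHom a = C b) : φ a = C ((φ a).coeff 0) := by
  ext (_ | n)
  · rw [coeff_C_zero]
  · have hfix : (φ 1).coeff 0 * (φ a).coeff (n + 1) = (φ a).coeff (n + 1) := by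
      conv_rhs => rw [← mul_one a, map_mul, φ.map_one_eq_C, coeff_mul_C, mul_comm]
    rw [coeff_C_succ, ← hfix,
      ← Ideal.Quotient.mk_span_one_sub_eq_zero_iff φ.isIdempotentElem_coeff_zero_map_one,
      ← coeff_toCornerAlgHom, hb, coeff_C_succ]

end NonUnitalAlgHom

/-- For a unital algebra `A` over a field `F`, an element `a` is sent to a constant polynomial by
every **unital** morphism `A → B[x]` (`B` commutative unital) if and only if it is sent to a
constant polynomial by every (not necessarily unital) morphism `A → C[x]` (`C` commutative). -/
theorem stmt_12 {F A : Type u} [Field F] [Ring A] [Algebra F A] :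
    {a : A | ∀ (B : Type u) [CommRing B] [Algebra F B]
        (φ : A →ₐ[F] Polynomial B), ∃ b : B, φ a = Polynomial.C b} =
      {a : A | ∀ (C : Type u) [CommRing C] [Algebra F C]
        (φ : A →ₙₐ[F] Polynomial C), ∃ c : C, φ a = Polynomial.C c} := by
  ext a
  constructor
  · intro H C _ _ φ
    obtain ⟨b, hb⟩ := H _ φ.toCornerAlgHom
    exact ⟨_, φ.eq_C_of_toCornerAlgHom_eq_C hb⟩
  · intro H B _ _ φ
    exact H B φ.toNonUnitalAlgHom
end

section
/- Let α, β : A → B be algebra morphisms. Then the morphisms A → M₂(B) given by a ↦ diag(α(a), β(a)) and a ↦ diag(β(a), α(a)) are elementary homotopic, i.e., there is a morphism H : A → M₂(B)[x] with ev₀∘H = diag(α,β) and ev₁∘H = diag(β,α). -/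
/-!
`R(x) = [[1 - x², x³ - 2x], [x, 1 - x²]]` has determinant `1`, so it is a unit of `M₂(ℤ[x])`
whose inverse is its adjugate; it runs from `R(0) = 1` to the rotation `R(1) = [[0, -1], [1, 0]]`,
and conjugating a diagonal matrix by that rotation swaps its entries. Conjugation by a unit and
the inclusion of constants are algebra maps, so `H a = R⁻¹ · diag(α a, β a) · R` is a homotopy
from `diag(α, β)` to `diag(β, α)`. Its coefficients lie in `M₂(B)` because killing the scalar part
of `Unitization F B` is a ring map that kills `diag(α a, β a)`, hence `H a`.
-/

open Matrix Polynomial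

theorem Unitization.inr_snd_of_fst_eq_zero {R A : Type*} [Zero R] [Zero A]
    {x : Unitization R A} (h : x.fst = 0) : (x.snd : Unitization R A) = x :=
  Unitization.ext (by simp [h]) rfl

section ConjPoly

variable {F A S : Type*} [CommSemiring F] [NonUnitalNonAssocSemiring A] [Module F A]
  [Semiring S] [Algebra F S]

noncomputable def conjPolyHom (u : S[X]ˣ) (f : A →ₙₐ[F] S) : A →ₙₐ[F] S[X] :=
  (MulSemiringAction.toAlgEquiv F S[X] (ConjAct.toConjAct u⁻¹)).toAlgHom.toNonUnitalAlgHom.comp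
    ((CAlgHom : S →ₐ[F] S[X]).toNonUnitalAlgHom.comp f)

theorem conjPolyHom_apply (u : S[X]ˣ) (f : A →ₙₐ[F] S) (a : A) :
    conjPolyHom u f a = ↑u⁻¹ * C (f a) * ↑u := by
  change ConjAct.toConjAct u⁻¹ • C (f a) = _
  rw [ConjAct.units_smul_def, ConjAct.ofConjAct_toConjAct, inv_inv]

theorem eval_conjPolyHom {t : S} (ht : ∀ s, Commute s t) (u : S[X]ˣ) (f : A →ₙₐ[F] S) (a : A) :
    (conjPolyHom u f a).eval t = (↑u⁻¹ : S[X]).eval t * f a * (u : S[X]).eval t := by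
  have eval_mul (p q : S[X]) : (p * q).eval t = p.eval t * q.eval t :=
    eval₂_mul_noncomm _ _ fun _ => ht _
  rw [conjPolyHom_apply, eval_mul, eval_mul, eval_C]

theorem map_coeff_conjPolyHom_eq_zero {T : Type*} [Semiring T] (ψ : S →+* T) (u : S[X]ˣ)
    (f : A →ₙₐ[F] S) (a : A) (hf : ψ (f a) = 0) (n : ℕ) :
    ψ ((conjPolyHom u f a).coeff n) = 0 := by
  rw [← coeff_map, conjPolyHom_apply, Polynomial.map_mul, Polynomial.map_mul, map_C, hf,
    C_0, mul_zero, zero_mul, coeff_zero]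

end ConjPoly

section Diag

variable {F A S : Type*} [CommSemiring F] [NonUnitalNonAssocSemiring A] [Module F A]
  [NonUnitalNonAssocSemiring S] [Module F S]

def diagHom (α β : A →ₙₐ[F] S) : A →ₙₐ[F] Matrix (Fin 2) (Fin 2) S where
  toFun a := diagonal ![α a, β a]
  map_smul' c a := by simp [← diagonal_smul]
  map_zero' := by simp
  map_add' a b := by simp [diagonal_add]
  map_mul' a b := by simp [diagonal_mul_diagonal]

theorem diagHom_apply (α β : A →ₙₐ[F] S) (a : A) : diagHom α β a = !![α a, 0; 0, β a] :=
  diagonal_vec2 _ _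

end Diag

-- Lets the identity `R · R⁻¹ = 1` be checked over the commutative ring `ℤ[X]`.
noncomputable def intMatPolyHom (S : Type*) [Ring S] (n : Type*) [Fintype n] [DecidableEq n] :
    Matrix n n ℤ[X] →+* (Matrix n n S)[X] :=
  (mapRingHom (Int.castRingHom S).mapMatrix).comp matPolyEquiv.toRingHom

theorem eval_intMatPolyHom {S n : Type*} [Ring S] [Fintype n] [DecidableEq n]
    (M : Matrix n n ℤ[X]) (t : ℤ) :
    (intMatPolyHom S n M).eval (t : Matrix n n S) = (M.map (eval t)).map (Int.cast : ℤ → S) := by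
  change ((matPolyEquiv M).map _).eval _ = _
  rw [eval_intCast_map, ← diagonal_intCast, ← scalar_apply, matPolyEquiv_eval_eq_map]
  rfl

noncomputable def rotPathInt : (Matrix (Fin 2) (Fin 2) ℤ[X])ˣ where
  val := !![1 - X ^ 2, X ^ 3 - 2 * X; X, 1 - X ^ 2]
  inv := !![1 - X ^ 2, 2 * X - X ^ 3; -X, 1 - X ^ 2]
  val_inv := by rw [mul_fin_two, one_fin_two]; ring_nf
  inv_val := by rw [mul_fin_two, one_fin_two]; ring_nf

noncomputable def rotPath (S : Type*) [Ring S] : (Matrix (Fin 2) (Fin 2) S)[X]ˣ :=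
  Units.map (intMatPolyHom S (Fin 2) : _ →* _) rotPathInt

section RotPath

variable {S : Type*} [Ring S]

theorem rotPath_eval_zero : (rotPath S : (Matrix (Fin 2) (Fin 2) S)[X]).eval 0 = 1 := by
  rw [← Int.cast_zero, rotPath, Units.coe_map, MonoidHom.coe_coe, eval_intMatPolyHom]
  simp [rotPathInt, ← Matrix.ext_iff, Fin.forall_fin_two]

theorem rotPath_inv_eval_zero : (↑(rotPath S)⁻¹ : (Matrix (Fin 2) (Fin 2) S)[X]).eval 0 = 1 := by
  rw [← Int.cast_zero, rotPath, Units.coe_map_inv, MonoidHom.coe_coe, eval_intMatPolyHom]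
  simp [rotPathInt, ← Matrix.ext_iff, Fin.forall_fin_two]

theorem rotPath_eval_one :
    (rotPath S : (Matrix (Fin 2) (Fin 2) S)[X]).eval 1 = !![0, -1; 1, 0] := by
  rw [← Int.cast_one, rotPath, Units.coe_map, MonoidHom.coe_coe, eval_intMatPolyHom]
  simp [rotPathInt, ← Matrix.ext_iff, Fin.forall_fin_two]

theorem rotPath_inv_eval_one :
    (↑(rotPath S)⁻¹ : (Matrix (Fin 2) (Fin 2) S)[X]).eval 1 = !![0, 1; -1, 0] := by
  rw [← Int.cast_one, rotPath, Units.coe_map_inv, MonoidHom.coe_coe, eval_intMatPolyHom]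
  simp [rotPathInt, ← Matrix.ext_iff, Fin.forall_fin_two]

theorem rot_inv_mul_diag_mul_rot (a b : S) :
    !![0, 1; -1, 0] * !![a, 0; 0, b] * !![0, -1; 1, 0] = !![b, 0; 0, a] := by
  simp

end RotPath

theorem stmt_16_general {F A B : Type*} [Field F]
    [NonUnitalRing A] [Module F A]
    [NonUnitalRing B] [Module F B] [SMulCommClass F B B] [IsScalarTower F B B]
    (α β : A →ₙₐ[F] B) :
    ∃ H : A →ₙₐ[F] Polynomial (Matrix (Fin 2) (Fin 2) (Unitization F B)),
      (∀ (a : A) (n : ℕ) (i j : Fin 2), ∃ b : B,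
        ((H a).coeff n) i j = Unitization.inr b) ∧
      (∀ a : A, (H a).eval 0 =
        !![(Unitization.inr (α a) : Unitization F B), 0; 0, Unitization.inr (β a)]) ∧
      (∀ a : A, (H a).eval 1 =
        !![(Unitization.inr (β a) : Unitization F B), 0; 0, Unitization.inr (α a)]) := by
  let ι := Unitization.inrNonUnitalAlgHom F B
  let D := diagHom (ι.comp α) (ι.comp β)
  refine ⟨conjPolyHom (rotPath _) D, fun a n i j => ?_, fun a => ?_, fun a => ?_⟩
  · have hfst := map_coeff_conjPolyHom_eq_zero (Unitization.fstHom F B).toRingHom.mapMatrix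
      (rotPath _) D a (by simp [D, ι, diagHom_apply, ← Matrix.ext_iff, Fin.forall_fin_two]) n
    exact ⟨_, (Unitization.inr_snd_of_fst_eq_zero (by simpa using congrFun₂ hfst i j)).symm⟩
  · rw [eval_conjPolyHom Commute.zero_right, rotPath_eval_zero, rotPath_inv_eval_zero, one_mul,
      mul_one]
    exact diagHom_apply _ _ a
  · rw [eval_conjPolyHom Commute.one_right, rotPath_eval_one, rotPath_inv_eval_one,
      diagHom_apply, rot_inv_mul_diag_mul_rot]
    rfl

/-- For morphisms `α, β : A → B` of (possibly nonunital, noncommutative) algebras over a field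
`F`, the morphisms `a ↦ diag(α a, β a)` and `a ↦ diag(β a, α a)` into `M₂(B)` are elementary
homotopic: there is a morphism `H : A → M₂(B)[x]` (matrices taken over the unitization of `B`,
with all coefficient entries in `B`) with `ev₀ ∘ H = diag(α, β)` and `ev₁ ∘ H = diag(β, α)`. -/
theorem stmt_16 {F A B : Type*} [Field F]
    [NonUnitalRing A] [Module F A] [SMulCommClass F A A] [IsScalarTower F A A]
    [NonUnitalRing B] [Module F B] [SMulCommClass F B B] [IsScalarTower F B B]
    (α β : A →ₙₐ[F] B) :
    ∃ H : A →ₙₐ[F] Polynomial (Matrix (Fin 2) (Fin 2) (Unitization F B)),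
      (∀ (a : A) (n : ℕ) (i j : Fin 2), ∃ b : B,
        ((H a).coeff n) i j = Unitization.inr b) ∧
      (∀ a : A, (H a).eval 0 =
        !![(Unitization.inr (α a) : Unitization F B), 0; 0, Unitization.inr (β a)]) ∧
      (∀ a : A, (H a).eval 1 =
        !![(Unitization.inr (β a) : Unitization F B), 0; 0, Unitization.inr (α a)]) :=
  stmt_16_general α β
end

section
/- Let F be an algebraically closed field and let G : A ↦ G(A) be an assignment of a subalgebra G(A) ⊆ A to each finitely generated commutative unital reduced F-algebra A, such that every algebra morphism f : A → B maps G(A) into G(B) and 1_A ∈ G(A). Then for finitely generated commutative unital reduced A and B, G(A ⊗ B) = G(A) ⊗ G(B) (as subspaces of A ⊗ B). -/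
/-!
Over an algebraically closed field a finitely generated reduced algebra `A` is separated by its
`F`-points (Nullstellensatz), and consequently so is `A ⊗ M` for any vector space `M`: a tensor
`c` lies in `A ⊗ W` as soon as `(h ⊗ id) c ∈ W` for every point `h` of `A`; in particular
`A ⊗ B` is reduced when `B` is, so `G` applies to it. Since `h ⊗ id` is an
algebra map `A ⊗ B → B`, functoriality sends `G(A ⊗ B)` into `G(B)`, so `G(A ⊗ B) ⊆ A ⊗ G(B)`, and
symmetrically `G(A ⊗ B) ⊆ G(A) ⊗ B`; over a field these two subspaces meet in `G(A) ⊗ G(B)`.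
Conversely `a ⊗ b` is the product of the images of `a` and `b` under the two inclusions.
-/

open TensorProduct

universe u

theorem eq_zero_of_forall_algHom_apply_eq_zero {F A : Type*} [Field F] [IsAlgClosed F]
    [CommRing A] [Algebra F A] [Algebra.FiniteType F A] [IsReduced A] {a : A}
    (h : ∀ φ : A →ₐ[F] F, φ a = 0) : a = 0 := by
  have : IsJacobsonRing A := isJacobsonRing_of_finiteType (A := F)
  rw [← Ideal.mem_bot, ← IsJacobsonRing.out this Ideal.isRadical_bot, Ideal.jacobson,
    Ideal.mem_sInf]
  rintro m ⟨-, hm⟩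
  let K := A ⧸ m
  let : Field K := Ideal.Quotient.field m
  have : Algebra.FiniteType F K := .of_surjective _ (Ideal.Quotient.mkₐ_surjective F m)
  have : Module.Finite F K := finite_of_finite_type_of_isJacobsonRing F K
  -- `K` is a finite extension of `F`, hence embeds into `F`
  have hφ := h ((IsAlgClosed.lift : K →ₐ[F] F).comp (Ideal.Quotient.mkₐ F m))
  simp only [AlgHom.comp_apply, map_eq_zero] at hφ
  rwa [← Ideal.Quotient.mkₐ_ker F m, RingHom.mem_ker]

section PointsOfTensors

variable {F A M N : Type*} [Field F] [CommRing A] [Algebra F A]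
  [AddCommGroup M] [Module F M] [AddCommGroup N] [Module F N]

theorem apply_equivFinsuppOfBasisRight_apply {ι : Type*} [DecidableEq ι] (f : A →ₗ[F] F)
    (b : Module.Basis ι F M) (x : A ⊗[F] M) (i : ι) :
    f (equivFinsuppOfBasisRight b x i) = b.repr (TensorProduct.lid F M (f.rTensor M x)) i := by
  induction x using TensorProduct.induction_on with
  | zero => simp
  | tmul a m => simp [mul_comm]
  | add x y hx hy => simp only [map_add, Finsupp.add_apply, hx, hy]

theorem lid_rTensor_lTensor (f : A →ₗ[F] F) (g : M →ₗ[F] N) (x : A ⊗[F] M) :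
    TensorProduct.lid F N (f.rTensor N (g.lTensor A x)) =
      g (TensorProduct.lid F M (f.rTensor M x)) := by
  induction x using TensorProduct.induction_on with
  | zero => simp
  | tmul a m => simp
  | add x y hx hy => simp only [map_add, hx, hy]

variable [IsAlgClosed F] [Algebra.FiniteType F A] [IsReduced A]

theorem eq_zero_of_forall_lid_rTensor_eq_zero {x : A ⊗[F] M}
    (h : ∀ φ : A →ₐ[F] F, TensorProduct.lid F M (φ.toLinearMap.rTensor M x) = 0) : x = 0 := by
  classical
  let b := Module.Basis.ofVectorSpace F M
  rw [← (equivFinsuppOfBasisRight b).map_eq_zero_iff]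
  ext i
  refine eq_zero_of_forall_algHom_apply_eq_zero (F := F) fun φ ↦ ?_
  rw [← AlgHom.toLinearMap_apply, apply_equivFinsuppOfBasisRight_apply, h φ]
  simp

theorem mem_range_lTensor_of_forall_lid_rTensor_mem (W : Submodule F M) {x : A ⊗[F] M}
    (h : ∀ φ : A →ₐ[F] F, TensorProduct.lid F M (φ.toLinearMap.rTensor M x) ∈ W) :
    x ∈ LinearMap.range (W.subtype.lTensor A) := by
  rw [← lTensor_mkQ, LinearMap.mem_ker]
  refine eq_zero_of_forall_lid_rTensor_eq_zero fun φ ↦ ?_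
  rw [lid_rTensor_lTensor, Submodule.mkQ_apply, Submodule.Quotient.mk_eq_zero]
  exact h φ

end PointsOfTensors

theorem range_lTensor_inf_range_rTensor_le {R M N : Type*} [CommRing R]
    [AddCommGroup M] [Module R M] [AddCommGroup N] [Module R N]
    (V : Submodule R M) (W : Submodule R N) [Module.Flat R (M ⧸ V)] :
    LinearMap.range (W.subtype.lTensor M) ⊓ LinearMap.range (V.subtype.rTensor N) ≤
      LinearMap.range (map V.subtype W.subtype) := by
  intro c hc
  obtain ⟨⟨d, rfl⟩, hc⟩ := Submodule.mem_inf.mp hc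
  rw [← rTensor_mkQ, LinearMap.mem_ker, ← LinearMap.comp_apply,
    LinearMap.rTensor_comp_lTensor, ← LinearMap.lTensor_comp_rTensor, LinearMap.comp_apply,
    ← (W.subtype.lTensor (M ⧸ V)).map_zero] at hc
  have hd : d ∈ LinearMap.range (V.subtype.rTensor W) := by
    rw [← rTensor_mkQ, LinearMap.mem_ker]
    exact Module.Flat.lTensor_preserves_injective_linearMap _ W.injective_subtype hc
  obtain ⟨e, rfl⟩ := hd
  exact ⟨e, by rw [← LinearMap.comp_apply, LinearMap.lTensor_comp_rTensor]⟩

section Algebras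

variable {F A B : Type*} [Field F] [CommRing A] [Algebra F A] [CommRing B] [Algebra F B]

noncomputable def evalLeft (φ : A →ₐ[F] F) : A ⊗[F] B →ₐ[F] B :=
  (Algebra.TensorProduct.lid F B).toAlgHom.comp (Algebra.TensorProduct.rTensor B φ)

theorem evalLeft_apply (φ : A →ₐ[F] F) (x : A ⊗[F] B) :
    evalLeft φ x = TensorProduct.lid F B (φ.toLinearMap.rTensor B x) :=
  rfl

instance [IsAlgClosed F] [Algebra.FiniteType F A] [IsReduced A] [IsReduced B] : IsReduced (A ⊗[F] B) :=
  ⟨fun x hx ↦ eq_zero_of_forall_lid_rTensor_eq_zero fun φ ↦ by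
    rw [← evalLeft_apply]
    exact (hx.map (evalLeft φ)).eq_zero⟩

end Algebras

def IsSubfunctorOfId {F : Type u} [Field F]
    (G : ∀ (A : Type u) [CommRing A] [Algebra F A], Subalgebra F A) : Prop :=
  ∀ (A : Type u) [CommRing A] [Algebra F A] (B : Type u) [CommRing B] [Algebra F B],
    Algebra.FiniteType F A → IsReduced A → Algebra.FiniteType F B → IsReduced B →
    ∀ f : A →ₐ[F] B, ∀ a ∈ G A, f a ∈ G B

namespace IsSubfunctorOfId

variable {F : Type u} [Field F]
  {G : ∀ (A : Type u) [CommRing A] [Algebra F A], Subalgebra F A} (hG : IsSubfunctorOfId G)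
  {A B : Type u} [CommRing A] [Algebra F A] [CommRing B] [Algebra F B]
  [Algebra.FiniteType F A] [IsReduced A] [Algebra.FiniteType F B] [IsReduced B]
include hG

theorem map_mem {C : Type u} [CommRing C] [Algebra F C] [Algebra.FiniteType F C] [IsReduced C]
    (f : A →ₐ[F] C) {a : A} (ha : a ∈ G A) : f a ∈ G C :=
  hG A C ‹_› ‹_› ‹_› ‹_› f a ha

variable [IsAlgClosed F]

theorem mem_range_lTensor {c : A ⊗[F] B} (hc : c ∈ G (A ⊗[F] B)) :
    c ∈ LinearMap.range ((Subalgebra.toSubmodule (G B)).subtype.lTensor A) := by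
  have : Algebra.FiniteType F (A ⊗[F] B) := .trans ‹Algebra.FiniteType F A› inferInstance
  exact mem_range_lTensor_of_forall_lid_rTensor_mem _ fun φ ↦ hG.map_mem (evalLeft φ) hc

theorem mem_range_rTensor {c : A ⊗[F] B} (hc : c ∈ G (A ⊗[F] B)) :
    c ∈ LinearMap.range ((Subalgebra.toSubmodule (G A)).subtype.rTensor B) := by
  have : Algebra.FiniteType F (A ⊗[F] B) := .trans ‹Algebra.FiniteType F A› inferInstance
  have : Algebra.FiniteType F (B ⊗[F] A) := .trans ‹Algebra.FiniteType F B› inferInstance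
  obtain ⟨d, hd⟩ := hG.mem_range_lTensor (hG.map_mem (Algebra.TensorProduct.comm F A B).toAlgHom hc)
  refine ⟨TensorProduct.comm F B _ d, ?_⟩
  rw [LinearMap.rTensor_comm, hd]
  exact (TensorProduct.comm F A B).symm_apply_apply c

theorem tmul_mem {a : A} {b : B} (ha : a ∈ G A) (hb : b ∈ G B) : a ⊗ₜ[F] b ∈ G (A ⊗[F] B) := by
  have : Algebra.FiniteType F (A ⊗[F] B) := .trans ‹Algebra.FiniteType F A› inferInstance
  rw [← mul_one a, ← one_mul b, ← Algebra.TensorProduct.tmul_mul_tmul]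
  exact mul_mem (hG.map_mem (Algebra.TensorProduct.includeLeft : A →ₐ[F] A ⊗[F] B) ha)
    (hG.map_mem (Algebra.TensorProduct.includeRight : B →ₐ[F] A ⊗[F] B) hb)

end IsSubfunctorOfId

/-- Let `F` be an algebraically closed field and `G` a subfunctor of the identity on the category
of finitely generated commutative unital reduced `F`-algebras (assigning to each such algebra `A`
a subalgebra `G A ⊆ A`, functorially).  Then for finitely generated commutative unital reduced
`A` and `B` one has `G(A ⊗ B) = G(A) ⊗ G(B)` inside `A ⊗ B`. -/
theorem stmt_18 {F : Type u} [Field F] [IsAlgClosed F]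
    (G : ∀ (A : Type u) [CommRing A] [Algebra F A], Subalgebra F A)
    (hG : ∀ (A : Type u) [CommRing A] [Algebra F A] (B : Type u) [CommRing B] [Algebra F B],
      Algebra.FiniteType F A → IsReduced A → Algebra.FiniteType F B → IsReduced B →
      ∀ f : A →ₐ[F] B, ∀ a ∈ G A, f a ∈ G B)
    (A B : Type u) [CommRing A] [Algebra F A] [CommRing B] [Algebra F B]
    [Algebra.FiniteType F A] [IsReduced A] [Algebra.FiniteType F B] [IsReduced B] :
    Subalgebra.toSubmodule (G (A ⊗[F] B)) =
      LinearMap.range (TensorProduct.map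
        ((Subalgebra.val (G A)).toLinearMap) ((Subalgebra.val (G B)).toLinearMap)) := by
  have hG : IsSubfunctorOfId G := hG
  apply le_antisymm
  · intro c hc
    exact range_lTensor_inf_range_rTensor_le (Subalgebra.toSubmodule (G A))
      (Subalgebra.toSubmodule (G B)) ⟨hG.mem_range_lTensor hc, hG.mem_range_rTensor hc⟩
  · rw [range_map_eq_span_tmul, Submodule.span_le]
    rintro _ ⟨a, b, rfl⟩
    exact hG.tmul_mem a.2 b.2
end
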